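/- Let 𝐌 : I^p → I^p be a mean-type mapping. The function 𝓛 : I^p → ℝ defined by 𝓛(v) = liminf of the sequence O*_𝐌(v) is an 𝐌-invariant mean on I, and it is the smallest 𝐌-invariant mean: for every 𝐌-invariant mean K one has 𝓛(v) ≤ K(v) for all v ∈ I^p. -/
import Mathlib


open Filter Set Topology

/-- `M` is a mean on the interval `I` (for `p`-tuples): its value is between the
minimum and the maximum of the arguments, for every tuple with entries in `I`. -/
def IsMean (I : Set ℝ) (p : ℕ) (M : (Fin p → ℝ) → ℝ) : Prop :=
  ∀ v : Fin p → ℝ, (∀ i, v i ∈ I) →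
    sInf (Set.range v) ≤ M v ∧ M v ≤ sSup (Set.range v)

/-- A mean-type mapping: every coordinate function is a mean on `I`, and it maps
`I^p` into `I^p`. -/
def IsMeanType (I : Set ℝ) (p : ℕ) (T : (Fin p → ℝ) → Fin p → ℝ) : Prop :=
  (∀ i, IsMean I p fun v => T v i) ∧
    ∀ v : Fin p → ℝ, (∀ i, v i ∈ I) → ∀ i, T v i ∈ I

/-- The unfolded orbit `O*_𝐌(v)`: the `(n*p + i)`-th term (`0 ≤ i < p`) is the
`i`-th coordinate of `𝐌ⁿ(v)`. -/
def orbitSeq (p : ℕ) (hp : 0 < p) (T : (Fin p → ℝ) → Fin p → ℝ)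
    (v : Fin p → ℝ) : ℕ → ℝ :=
  fun k => (T^[k / p] v) ⟨k % p, Nat.mod_lt k hp⟩

/-- `𝓛 := liminf ∘ O*_𝐌` is the smallest `𝐌`-invariant mean. -/
theorem liminf_orbit_isSmallest_invariant_mean
    {I : Set ℝ} (hne : I.Nonempty) (hI : I.OrdConnected)
    {p : ℕ} (hp : 2 ≤ p)
    (T : (Fin p → ℝ) → Fin p → ℝ) (hT : IsMeanType I p T) :
    (IsMean I p (fun v => Filter.liminf (orbitSeq p (by omega) T v) Filter.atTop) ∧
      (∀ v : Fin p → ℝ, (∀ i, v i ∈ I) →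
        Filter.liminf (orbitSeq p (by omega) T (T v)) Filter.atTop =
          Filter.liminf (orbitSeq p (by omega) T v) Filter.atTop)) ∧
    ∀ K : (Fin p → ℝ) → ℝ, IsMean I p K →
      (∀ v : Fin p → ℝ, (∀ i, v i ∈ I) → K (T v) = K v) →
      ∀ v : Fin p → ℝ, (∀ i, v i ∈ I) →
        Filter.liminf (orbitSeq p (by omega) T v) Filter.atTop ≤ K v := by
  have hp0 : 0 < p := by omega
  haveI : Nonempty (Fin p) := ⟨⟨0, hp0⟩⟩
  -- iterates stay in I and between the original bounds
  have key : ∀ v : Fin p → ℝ, (∀ i, v i ∈ I) → ∀ n : ℕ,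
      (∀ i, T^[n] v i ∈ I) ∧
      (∀ i, sInf (Set.range v) ≤ T^[n] v i ∧ T^[n] v i ≤ sSup (Set.range v)) := by
    intro v hv n
    induction n with
    | zero =>
      refine ⟨hv, fun i => ⟨csInf_le (Set.finite_range v).bddBelow ⟨i, rfl⟩,
        le_csSup (Set.finite_range v).bddAbove ⟨i, rfl⟩⟩⟩
    | succ n ih =>
      obtain ⟨h1, h2⟩ := ih
      rw [Function.iterate_succ_apply']
      refine ⟨fun i => hT.2 _ h1 i, fun i => ?_⟩
      obtain ⟨hl, hu⟩ := hT.1 i (T^[n] v) h1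
      constructor
      · refine le_trans (le_csInf (Set.range_nonempty _) ?_) hl
        rintro _ ⟨j, rfl⟩; exact (h2 j).1
      · refine le_trans hu (csSup_le (Set.range_nonempty _) ?_)
        rintro _ ⟨j, rfl⟩; exact (h2 j).2
  -- orbit bounds
  have orb_bd : ∀ v : Fin p → ℝ, (∀ i, v i ∈ I) → ∀ k : ℕ,
      sInf (Set.range v) ≤ orbitSeq p hp0 T v k ∧
      orbitSeq p hp0 T v k ≤ sSup (Set.range v) := by
    intro v hv k
    exact (key v hv (k / p)).2 _
  have bd_above : ∀ v : Fin p → ℝ, (∀ i, v i ∈ I) →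
      IsBoundedUnder (· ≤ ·) atTop (orbitSeq p hp0 T v) := fun v hv =>
    isBoundedUnder_of ⟨sSup (Set.range v), fun k => (orb_bd v hv k).2⟩
  have bd_below : ∀ v : Fin p → ℝ, (∀ i, v i ∈ I) →
      IsBoundedUnder (· ≥ ·) atTop (orbitSeq p hp0 T v) := fun v hv =>
    isBoundedUnder_of ⟨sInf (Set.range v), fun k => (orb_bd v hv k).1⟩
  -- shift identity
  have shift : ∀ v : Fin p → ℝ, orbitSeq p hp0 T (T v) =
      fun k => orbitSeq p hp0 T v (k + p) := by
    intro v
    funext k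
    simp only [orbitSeq]
    have h1 : (k + p) / p = k / p + 1 := by
      rw [Nat.add_div_right _ hp0]
    have h2 : (k + p) % p = k % p := Nat.add_mod_right k p
    have h3 : T^[k / p + 1] v = T^[k / p] (T v) := Function.iterate_succ_apply T _ v
    simp only [h1, h2, h3]
  refine ⟨⟨?_, ?_⟩, ?_⟩
  · -- mean
    intro v hv
    constructor
    · exact le_liminf_of_le (IsBoundedUnder.isCoboundedUnder_ge (bd_above v hv))
        (Eventually.of_forall fun k => (orb_bd v hv k).1)
    · exact liminf_le_of_frequently_le
        (Frequently.of_forall fun k => (orb_bd v hv k).2) (bd_below v hv)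
  · -- invariance
    intro v _
    rw [shift v]
    exact liminf_nat_add _ p
  · -- minimality
    intro K hK hKinv v hv
    have hKn : ∀ n : ℕ, K (T^[n] v) = K v := by
      intro n
      induction n with
      | zero => rfl
      | succ n ih =>
        rw [Function.iterate_succ_apply', hKinv _ (key v hv n).1, ih]
    refine liminf_le_of_frequently_le ?_ (bd_below v hv)
    rw [frequently_atTop]
    intro N
    obtain ⟨i0, hi0⟩ := Finite.exists_min (T^[N] v)
    refine ⟨i0.val + p * N, ?_, ?_⟩
    · calc N ≤ p * N := Nat.le_mul_of_pos_left N hp0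
        _ ≤ i0.val + p * N := Nat.le_add_left _ _
    · have hdiv : (i0.val + p * N) / p = N := by
        rw [Nat.add_mul_div_left _ _ hp0, Nat.div_eq_of_lt i0.isLt, Nat.zero_add]
      have hmod : (i0.val + p * N) % p = i0.val := by
        rw [Nat.add_mul_mod_self_left, Nat.mod_eq_of_lt i0.isLt]
      have : orbitSeq p hp0 T v (i0.val + p * N) = T^[N] v i0 := by
        simp only [orbitSeq, hdiv, hmod]
      rw [this, ← hKn N]
      calc T^[N] v i0 ≤ sInf (Set.range (T^[N] v)) := le_csInf (Set.range_nonempty _)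
            (by rintro _ ⟨j, rfl⟩; exact hi0 j)
        _ ≤ K (T^[N] v) := (hK _ (key v hv N).1).1
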